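/- Let m be a non-negative integer and α > 0. Then there is an η > 0, depending only on m and α, with the following property: if X is a metric space and f : [0,1]^{1+m} → X is 1-Lipschitz with diam(f([0,1]^{1+m})) ≥ α, then the (1,m)-mapping content satisfies H^{1,m}_∞(f, [0,1]^{1+m}) ≥ η. -/

import Mathlib

open Metric Set MeasureTheory ENNReal

noncomputable section

/-- The `k`-dimensional Hausdorff content of a set in a metric space, defined via
countable covers by closed balls. -/
def hContent {X : Type*} [MetricSpace X] (k : ℕ) (S : Set X) : ℝ≥0∞ :=
  ⨅ (B : ℕ → Set X) (_ : S ⊆ ⋃ i, B i) (_ : ∀ i, ∃ x r, B i = Metric.closedBall x r),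
    ∑' i, EMetric.diam (B i) ^ k

/-- The `k`-dimensional Hausdorff measure of a set in a metric space, defined via
countable covers by closed balls of diameter at most `δ`, letting `δ → 0`. -/
def hMeasure {X : Type*} [MetricSpace X] (k : ℕ) (S : Set X) : ℝ≥0∞ :=
  ⨆ (δ : ℝ≥0∞) (_ : 0 < δ),
    ⨅ (B : ℕ → Set X) (_ : S ⊆ ⋃ i, B i)
      (_ : ∀ i, (∃ x r, B i = Metric.closedBall x r) ∧ EMetric.diam (B i) ≤ δ),
      ∑' i, EMetric.diam (B i) ^ k

/-- The closed unit cube `[0,1]^d` in `ℝ^d`. -/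
def unitCube (d : ℕ) : Set (EuclideanSpace ℝ (Fin d)) :=
  {p | ∀ i, p i ∈ Set.Icc (0 : ℝ) 1}

/-- A dyadic subcube of `[0,1]^d`: it has side length `2⁻ᵏ` and lower-left corner `z/2ᵏ`. -/
structure DyadicCube (d : ℕ) : Type where
  k : ℕ
  z : Fin d → ℕ
  hz : ∀ i, z i + 1 ≤ 2 ^ k

namespace DyadicCube

/-- The side length of a dyadic cube. -/
def side {d : ℕ} (Q : DyadicCube d) : ℝ := (2 : ℝ)⁻¹ ^ Q.k

/-- The center of a dyadic cube. -/
def center {d : ℕ} (Q : DyadicCube d) (i : Fin d) : ℝ :=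
  ((Q.z i : ℝ) + 1 / 2) * (2 : ℝ)⁻¹ ^ Q.k

/-- The dyadic cube as a (closed) subset of `ℝ^d`. -/
def toSet {d : ℕ} (Q : DyadicCube d) : Set (EuclideanSpace ℝ (Fin d)) :=
  {p | ∀ i, |p i - Q.center i| ≤ Q.side / 2}

/-- `Q.scaled λ` is the cube `λQ`, with the same center as `Q` and `λ` times the side length. -/
def scaled {d : ℕ} (Q : DyadicCube d) (lam : ℝ) : Set (EuclideanSpace ℝ (Fin d)) :=
  {p | ∀ i, |p i - Q.center i| ≤ lam * Q.side / 2}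

end DyadicCube

/-- The `(n,m)`-mapping content `H^{n,m}_∞(f, A)`: the infimum of
`∑ H^n_∞(f(Q_i)) side(Q_i)^m` over countable covers of `A` by dyadic cubes of `[0,1]^{n+m}`
with pairwise disjoint interiors. -/
def mContent (n m : ℕ) {X : Type*} [MetricSpace X]
    (f : EuclideanSpace ℝ (Fin (n + m)) → X)
    (A : Set (EuclideanSpace ℝ (Fin (n + m)))) : ℝ≥0∞ :=
  ⨅ (S : Set (DyadicCube (n + m))) (_ : A ⊆ ⋃ Q ∈ S, Q.toSet)
    (_ : S.Pairwise fun Q Q' => interior Q.toSet ∩ interior Q'.toSet = ∅),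
    ∑' Q : S, hContent n (f '' Q.1.toSet) * ENNReal.ofReal (Q.1.side ^ m)

/-- The alternative `(n,m)`-mapping content `Ĥ^{n,m}_∞(f, A)`: the infimum of
`∑ H^n_∞(f(S_i)) diam(S_i)^m` over countable covers of `A` by arbitrary subsets of
`[0,1]^{n+m}`. -/
def altMContent (n m : ℕ) {X : Type*} [MetricSpace X]
    (f : EuclideanSpace ℝ (Fin (n + m)) → X)
    (A : Set (EuclideanSpace ℝ (Fin (n + m)))) : ℝ≥0∞ :=
  ⨅ (S : ℕ → Set (EuclideanSpace ℝ (Fin (n + m)))) (_ : A ⊆ ⋃ i, S i)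
    (_ : ∀ i, S i ⊆ unitCube (n + m)),
    ∑' i, hContent n (f '' S i) * EMetric.diam (S i) ^ m

/-- The first `n` coordinates of a point of `ℝ^{n+m} = ℝ^n × ℝ^m`. -/
def xpart (n m : ℕ) (p : EuclideanSpace ℝ (Fin (n + m))) : EuclideanSpace ℝ (Fin n) :=
  WithLp.toLp 2 fun i => p (Fin.castAdd m i)

/-- The last `m` coordinates of a point of `ℝ^{n+m} = ℝ^n × ℝ^m`. -/
def ypart (n m : ℕ) (p : EuclideanSpace ℝ (Fin (n + m))) : EuclideanSpace ℝ (Fin m) :=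
  WithLp.toLp 2 fun j => p (Fin.natAdd n j)

/-- The point `(x, y) ∈ ℝ^{n+m}` built from `x ∈ ℝ^n`, `y ∈ ℝ^m`. -/
def pairup (n m : ℕ) (x : EuclideanSpace ℝ (Fin n)) (y : EuclideanSpace ℝ (Fin m)) :
    EuclideanSpace ℝ (Fin (n + m)) :=
  WithLp.toLp 2 fun i => Fin.addCases (fun i₁ => x i₁) (fun j => y j) i

/-- The horizontal slice `E_y = E ∩ (ℝ^n × {y})`. -/
def cubeSlice (n m : ℕ) (E : Set (EuclideanSpace ℝ (Fin (n + m))))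
    (y : EuclideanSpace ℝ (Fin m)) : Set (EuclideanSpace ℝ (Fin (n + m))) :=
  {p ∈ E | ypart n m p = y}

/-- `f` is `C`-bi-Lipschitz on `s`. -/
def BiLipschitzOnWith {α β : Type*} [PseudoMetricSpace α] [PseudoMetricSpace β]
    (C : ℝ) (f : α → β) (s : Set α) : Prop :=
  ∀ x ∈ s, ∀ y ∈ s, C⁻¹ * dist x y ≤ dist (f x) (f y) ∧ dist (f x) (f y) ≤ C * dist x y

/-- `(E, g)` is a Hard Sard pair for `f` with constant `C`:
(i) `g` is a globally `C`-bi-Lipschitz homeomorphism of `ℝ^{n+m}` (in particular it restricts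
to a bi-Lipschitz map on `E`);
(ii) writing `F = f ∘ g⁻¹`, for `(x,y), (x',y') ∈ g(E)` one has `F(x,y) = F(x',y')` iff `x = x'`;
(iii) the map `(x,y) ↦ (F(x,y), y)` is `C`-bi-Lipschitz on `g(E)`, where `X × ℝ^m` carries the
max metric.  Conditions (ii) and (iii) are expressed at points `p = g⁻¹(x,y)`, `q = g⁻¹(x',y')`
of `E`. -/
def IsHardSardPairWith (n m : ℕ) {X : Type*} [MetricSpace X]
    (f : EuclideanSpace ℝ (Fin (n + m)) → X)
    (E : Set (EuclideanSpace ℝ (Fin (n + m))))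
    (g : EuclideanSpace ℝ (Fin (n + m)) → EuclideanSpace ℝ (Fin (n + m)))
    (C : ℝ) : Prop :=
  Function.Surjective g ∧
  BiLipschitzOnWith C g Set.univ ∧
  (∀ p ∈ E, ∀ q ∈ E, (f p = f q ↔ xpart n m (g p) = xpart n m (g q))) ∧
  (∀ p ∈ E, ∀ q ∈ E,
    C⁻¹ * dist (g p) (g q) ≤ dist (f p, ypart n m (g p)) (f q, ypart n m (g q)) ∧
    dist (f p, ypart n m (g p)) (f q, ypart n m (g q)) ≤ C * dist (g p) (g q))

/-- `E` is a Hard Sard set for `f` with constant `C`. -/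
def IsHardSardSetWith (n m : ℕ) {X : Type*} [MetricSpace X]
    (f : EuclideanSpace ℝ (Fin (n + m)) → X)
    (E : Set (EuclideanSpace ℝ (Fin (n + m)))) (C : ℝ) : Prop :=
  ∃ g, IsHardSardPairWith n m f E g C

/-- `sup_{x,y ∈ s} | d(f(x), f(y)) - N(x - y) |`. -/
def mdSup {d : ℕ} {X : Type*} [MetricSpace X] (f : EuclideanSpace ℝ (Fin d) → X)
    (s : Set (EuclideanSpace ℝ (Fin d))) (N : Seminorm ℝ (EuclideanSpace ℝ (Fin d))) : ℝ :=
  ⨆ x : s, ⨆ y : s, |dist (f x.1) (f y.1) - N (x.1 - y.1)|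

/-- `md_f` on a set `s` (a cube of side length `side`):
`side⁻¹ · inf_N sup_{x,y ∈ s} | d(f(x), f(y)) - N(x-y) |`, the infimum being over all
seminorms `N` on `ℝ^d`. -/
def mdf {d : ℕ} {X : Type*} [MetricSpace X] (f : EuclideanSpace ℝ (Fin d) → X)
    (s : Set (EuclideanSpace ℝ (Fin d))) (side : ℝ) : ℝ :=
  side⁻¹ * ⨅ N : Seminorm ℝ (EuclideanSpace ℝ (Fin d)), mdSup f s N

/-- The coordinate plane spanned by the standard basis vectors `e_i`, `i ∈ s`. -/
def coordPlane {d : ℕ} (s : Finset (Fin d)) : Submodule ℝ (EuclideanSpace ℝ (Fin d)) :=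
  Submodule.span ℝ {v | ∃ i ∈ s, v = EuclideanSpace.single i (1 : ℝ)}


/-!
Some axis-parallel segment `ℓ` of the cube carries an oscillation `β = α / (2(1+m))` of `f`: walk
from `p` to `q`, where `d(f p, f q) > α/2`, changing one coordinate at a time. As `f` is
1-Lipschitz, every parallel segment whose base point lies in a box `R` of volume `ρ^m` around `ℓ`
still carries oscillation `β/2`. Given a cover by dyadic cubes `Q`, the image of such a segment is
connected, so `β/2` is at most the sum of the diameters of the images of its pieces in the cubes,
and each of these is at most `H¹_∞(f(Q))`. A segment meets `Q` only if its base point lies in a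
slab of cross-section `side(Q)^m`, so integrating over `R` yields
`β/2 · ρ^m ≤ ∑ H¹_∞(f(Q)) side(Q)^m`.
-/

open Function

section CoordBox

variable {ι : Type*}

def coordBox (s : ι → Set ℝ) : Set (EuclideanSpace ℝ ι) := {p | ∀ i, p i ∈ s i}

@[simp] lemma mem_coordBox {s : ι → Set ℝ} {p : EuclideanSpace ℝ ι} :
    p ∈ coordBox s ↔ ∀ i, p i ∈ s i := Iff.rfl

lemma coordBox_mono {s t : ι → Set ℝ} (h : ∀ i, s i ⊆ t i) : coordBox s ⊆ coordBox t :=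
  fun _ hp i => h i (hp i)

lemma convex_coordBox {s : ι → Set ℝ} (hs : ∀ i, Convex ℝ (s i)) : Convex ℝ (coordBox s) :=
  fun _ hx _ hy _ _ ha hb hab i => hs i (hx i) (hy i) ha hb hab

lemma coordBox_eq_preimage (s : ι → Set ℝ) : coordBox s = WithLp.ofLp ⁻¹' univ.pi s := by
  ext p
  simp

variable [Fintype ι]

lemma measurableSet_coordBox {s : ι → Set ℝ} (hs : ∀ i, MeasurableSet (s i)) :
    MeasurableSet (coordBox s) := by
  rw [coordBox_eq_preimage]
  exact (PiLp.volume_preserving_ofLp ι).measurable (.univ_pi hs)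

lemma volume_coordBox {s : ι → Set ℝ} (hs : ∀ i, MeasurableSet (s i)) :
    volume (coordBox s) = ∏ i, volume (s i) := by
  rw [coordBox_eq_preimage, (PiLp.volume_preserving_ofLp ι).measure_preimage
    (MeasurableSet.univ_pi hs).nullMeasurableSet, volume_pi_pi]

lemma volume_coordBox_update [DecidableEq ι] {s : ι → Set ℝ} (hs : ∀ i, MeasurableSet (s i))
    (i₀ : ι) {a : Set ℝ} (ha : MeasurableSet a) {v : ℝ≥0∞}
    (hv : ∀ i ≠ i₀, volume (s i) = v) :
    volume (coordBox (update s i₀ a)) = volume a * v ^ (Fintype.card ι - 1) := by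
  have hmeas : ∀ i, MeasurableSet (update s i₀ a i) := by
    intro i
    rcases eq_or_ne i i₀ with rfl | hi
    · simpa
    · simpa [hi] using hs i
  rw [volume_coordBox hmeas]
  simp_rw [apply_update (fun _ => volume) s i₀ a]
  rw [Finset.prod_update_of_mem (Finset.mem_univ i₀),
    Finset.prod_congr rfl fun i hi => hv i (by simpa using hi), Finset.prod_const,
    Finset.card_univ_sdiff, Finset.card_singleton]

end CoordBox

section AxisLine

variable {ι : Type*} [DecidableEq ι]

def updateCoord (w : EuclideanSpace ℝ ι) (i₀ : ι) (t : ℝ) : EuclideanSpace ℝ ι :=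
  WithLp.toLp 2 (update w.ofLp i₀ t)

@[simp] lemma updateCoord_apply (w : EuclideanSpace ℝ ι) (i₀ : ι) (t : ℝ) (i : ι) :
    updateCoord w i₀ t i = update w.ofLp i₀ t i := rfl

def axisLine (i₀ : ι) (w : EuclideanSpace ℝ ι) : Set (EuclideanSpace ℝ ι) :=
  coordBox (update (fun i => {w i}) i₀ (Icc 0 1))

lemma convex_axisLine (i₀ : ι) (w : EuclideanSpace ℝ ι) : Convex ℝ (axisLine i₀ w) := by
  refine convex_coordBox fun i => ?_
  rcases eq_or_ne i i₀ with rfl | hi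
  · simpa using convex_Icc 0 1
  · simp [hi, convex_singleton]

lemma updateCoord_mem_axisLine {i₀ : ι} {t : ℝ} (w : EuclideanSpace ℝ ι) (ht : t ∈ Icc 0 1) :
    updateCoord w i₀ t ∈ axisLine i₀ w := by
  intro i
  rcases eq_or_ne i i₀ with rfl | hi
  · simpa using ht
  · simp [hi]

lemma axisLine_subset_coordBox {i₀ : ι} {w : EuclideanSpace ℝ ι} {s : ι → Set ℝ}
    (hw : w ∈ coordBox s) (hs : Icc 0 1 ⊆ s i₀) : axisLine i₀ w ⊆ coordBox s := by
  intro p hp i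
  rcases eq_or_ne i i₀ with rfl | hi
  · exact hs (by simpa using hp i)
  · simpa [show p i = w i by simpa [hi] using hp i] using hw i

lemma mem_coordBox_update_univ {i₀ : ι} {w : EuclideanSpace ℝ ι} {s : ι → Set ℝ}
    (h : (axisLine i₀ w ∩ coordBox s).Nonempty) : w ∈ coordBox (update s i₀ univ) := by
  obtain ⟨p, hpw, hps⟩ := h
  intro i
  rcases eq_or_ne i i₀ with rfl | hi
  · simp
  · simpa [hi, show p i = w i by simpa [hi] using hpw i] using hps i

end AxisLine

section Connected

variable {X : Type*}

/-- `dist x ·` is 1-Lipschitz and maps `S` onto a set containing `[0, dist x y]`, so the Lebesgue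
measure of that interval is bounded through the cover. -/
theorem IsPreconnected.edist_le_tsum_ediam [PseudoMetricSpace X] {ι : Type*} [Countable ι]
    {S : Set X} (hS : IsPreconnected S) {x y : X} (hx : x ∈ S) (hy : y ∈ S) {U : ι → Set X}
    (hU : S ⊆ ⋃ i, U i) : edist x y ≤ ∑' i, ediam (U i) := by
  have hI : Icc 0 (dist x y) ⊆ ⋃ i, dist x '' U i := by
    refine ((hS.image _ (continuous_const.dist continuous_id).continuousOn).Icc_subset
      ⟨x, hx, dist_self x⟩ ⟨y, hy, rfl⟩).trans ?_
    rw [← image_iUnion]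
    exact image_mono hU
  calc edist x y = volume (Icc 0 (dist x y)) := by rw [Real.volume_Icc, sub_zero, edist_dist]
    _ ≤ ∑' i, volume (dist x '' U i) := (measure_mono hI).trans (measure_iUnion_le _)
    _ ≤ ∑' i, ediam (dist x '' U i) := ENNReal.tsum_le_tsum fun i => Real.volume_le_diam _
    _ ≤ ∑' i, ediam (U i) := ENNReal.tsum_le_tsum fun i => by
      simpa using (LipschitzWith.dist_right x).ediam_image_le (U i)

theorem IsPreconnected.ediam_le_hContent_one [MetricSpace X] {S T : Set X}
    (hS : IsPreconnected S) (hST : S ⊆ T) : ediam S ≤ hContent 1 T :=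
  le_iInf₂ fun B hB => le_iInf fun _ => ediam_le fun x hx y hy => by
    simp only [pow_one]
    exact hS.edist_le_tsum_ediam hx hy (hST.trans hB)

end Connected

namespace DyadicCube

variable {d : ℕ}

instance : Countable (DyadicCube d) :=
  Function.Injective.countable (f := fun Q : DyadicCube d => (Q.k, Q.z))
    fun ⟨_, _, _⟩ ⟨_, _, _⟩ h => by
      obtain ⟨rfl, rfl⟩ := Prod.mk.inj h
      rfl

def interval (Q : DyadicCube d) (i : Fin d) : Set ℝ :=
  Icc (Q.center i - Q.side / 2) (Q.center i + Q.side / 2)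

lemma toSet_eq_coordBox (Q : DyadicCube d) : Q.toSet = coordBox Q.interval := by
  ext p
  simp [toSet, interval, abs_le, add_comm]

lemma interval_subset_Icc (Q : DyadicCube d) (i : Fin d) : Q.interval i ⊆ Icc 0 1 := by
  have hz : (Q.z i : ℝ) + 1 ≤ 2 ^ Q.k := by exact_mod_cast Q.hz i
  have hside : Q.side * 2 ^ Q.k = 1 := by simp [side]
  refine Icc_subset_Icc ?_ ?_ <;> simp only [center, side] at hside ⊢ <;> nlinarith [Q.z i]

lemma toSet_subset_unitCube (Q : DyadicCube d) : Q.toSet ⊆ unitCube d := by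
  rw [toSet_eq_coordBox]
  exact coordBox_mono Q.interval_subset_Icc

end DyadicCube

section LineIntegral

variable {X : Type*} [MetricSpace X]

lemma ediam_image_axisLine_inter_le_indicator {ι : Type*} [Fintype ι] [DecidableEq ι]
    {f : EuclideanSpace ℝ ι → X} {s : ι → Set ℝ} (hs : ∀ i, Convex ℝ (s i))
    (hf : ContinuousOn f (coordBox s)) (i₀ : ι) (w : EuclideanSpace ℝ ι) :
    ediam (f '' (axisLine i₀ w ∩ coordBox s)) ≤
      (coordBox (update s i₀ univ)).indicator (fun _ => hContent 1 (f '' coordBox s)) w := by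
  by_cases hw : w ∈ coordBox (update s i₀ univ)
  · rw [indicator_of_mem hw]
    exact (((convex_axisLine i₀ w).inter (convex_coordBox hs)).isPreconnected.image f
      (hf.mono inter_subset_right)).ediam_le_hContent_one (image_mono inter_subset_right)
  · have : axisLine i₀ w ∩ coordBox s = ∅ :=
      not_nonempty_iff_eq_empty.1 fun h => hw (mem_coordBox_update_univ h)
    simp [this]

lemma edist_le_tsum_indicator {d : ℕ} {f : EuclideanSpace ℝ (Fin d) → X}
    (hf : ContinuousOn f (unitCube d)) {S : Set (DyadicCube d)}
    (hS : unitCube d ⊆ ⋃ Q ∈ S, Q.toSet) (i₀ : Fin d) {w a b : EuclideanSpace ℝ (Fin d)}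
    (hw : w ∈ unitCube d) (ha : a ∈ axisLine i₀ w) (hb : b ∈ axisLine i₀ w) :
    edist (f a) (f b) ≤ ∑' Q : S,
      (coordBox (update Q.1.interval i₀ univ)).indicator
        (fun _ => hContent 1 (f '' Q.1.toSet)) w := by
  have hline : axisLine i₀ w ⊆ unitCube d := axisLine_subset_coordBox hw subset_rfl
  have hcov : f '' axisLine i₀ w ⊆ ⋃ Q : S, f '' (axisLine i₀ w ∩ Q.1.toSet) := by
    rintro _ ⟨p, hp, rfl⟩
    obtain ⟨Q, hQ, hpQ⟩ := mem_iUnion₂.1 (hS (hline hp))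
    exact mem_iUnion.2 ⟨⟨Q, hQ⟩, p, ⟨hp, hpQ⟩, rfl⟩
  refine (((convex_axisLine i₀ w).isPreconnected.image f (hf.mono hline)).edist_le_tsum_ediam
    (mem_image_of_mem f ha) (mem_image_of_mem f hb) hcov).trans
    (ENNReal.tsum_le_tsum fun Q => ?_)
  rw [Q.1.toSet_eq_coordBox]
  refine ediam_image_axisLine_inter_le_indicator (s := Q.1.interval) (fun i => convex_Icc _ _) ?_
    i₀ w
  rw [← Q.1.toSet_eq_coordBox]
  exact hf.mono Q.1.toSet_subset_unitCube

theorem mul_volume_le_mContent {m : ℕ} {f : EuclideanSpace ℝ (Fin (1 + m)) → X}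
    (hf : ContinuousOn f (unitCube (1 + m))) (i₀ : Fin (1 + m)) {s t : ℝ} (hs : s ∈ Icc 0 1)
    (ht : t ∈ Icc 0 1) {R : Set (EuclideanSpace ℝ (Fin (1 + m)))} (hR : MeasurableSet R)
    (hRcube : R ⊆ unitCube (1 + m)) {c : ℝ≥0∞}
    (hc : ∀ w ∈ R, c ≤ edist (f (updateCoord w i₀ s)) (f (updateCoord w i₀ t))) :
    c * volume R ≤ mContent 1 m f (unitCube (1 + m)) := by
  refine le_iInf₂ fun S hS => le_iInf fun _ => ?_
  set slab : DyadicCube (1 + m) → Set (EuclideanSpace ℝ (Fin (1 + m))) :=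
    fun Q => coordBox (update Q.interval i₀ univ)
  have hslab : ∀ Q, MeasurableSet (slab Q) := fun Q => measurableSet_coordBox fun i => by
    rcases eq_or_ne i i₀ with rfl | hi
    · simp
    · simp [hi, DyadicCube.interval]
  have hslabR : ∀ Q : DyadicCube (1 + m), volume (slab Q ∩ R) ≤ ENNReal.ofReal (Q.side ^ m) := by
    intro Q
    have hsub : slab Q ∩ R ⊆ coordBox (update Q.interval i₀ (Icc 0 1)) := by
      rintro p ⟨hpQ, hpR⟩ i
      rcases eq_or_ne i i₀ with rfl | hi
      · simpa using hRcube hpR i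
      · simpa [hi] using hpQ i
    refine (measure_mono hsub).trans_eq ?_
    rw [volume_coordBox_update (s := Q.interval) (fun i => measurableSet_Icc) i₀ measurableSet_Icc
      (v := ENNReal.ofReal Q.side) fun i _ => by simp [DyadicCube.interval]]
    simp [ENNReal.ofReal_pow (show 0 ≤ Q.side by simp [DyadicCube.side])]
  have hpoint : ∀ w ∈ R,
      c ≤ ∑' Q : S, (slab Q.1).indicator (fun _ => hContent 1 (f '' Q.1.toSet)) w :=
    fun w hw => (hc w hw).trans <| edist_le_tsum_indicator hf hS i₀ (hRcube hw)
      (updateCoord_mem_axisLine w hs) (updateCoord_mem_axisLine w ht)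
  calc c * volume R = ∫⁻ _ in R, c := (setLIntegral_const R c).symm
    _ ≤ ∫⁻ w in R, ∑' Q : S, (slab Q.1).indicator (fun _ => hContent 1 (f '' Q.1.toSet)) w :=
        setLIntegral_mono' hR hpoint
    _ = ∑' Q : S, hContent 1 (f '' Q.1.toSet) * volume (slab Q.1 ∩ R) := by
        rw [lintegral_tsum fun Q : S => aemeasurable_const.indicator (hslab Q.1)]
        simp_rw [lintegral_indicator_const (hslab _), Measure.restrict_apply (hslab _)]
    _ ≤ _ := ENNReal.tsum_le_tsum fun Q => mul_le_mul_right (hslabR Q.1) _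

end LineIntegral

section Oscillation

variable {X : Type*} [PseudoMetricSpace X]

lemma exists_lt_dist_of_ofReal_lt_ediam {s : Set X} {r : ℝ} (h : ENNReal.ofReal r < ediam s) :
    ∃ x ∈ s, ∃ y ∈ s, r < dist x y := by
  by_contra! hle
  exact h.not_ge <| ediam_le fun x hx y hy =>
    edist_dist x y ▸ ENNReal.ofReal_le_ofReal (hle x hx y hy)

lemma LipschitzOnWith.dist_le_dist_add_dist_add_dist {Y : Type*} [PseudoMetricSpace Y]
    {f : X → Y} {s : Set X} (hf : LipschitzOnWith 1 f s) {a b a' b' : X} (ha : a ∈ s)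
    (hb : b ∈ s) (ha' : a' ∈ s) (hb' : b' ∈ s) :
    dist (f a') (f b') ≤ dist (f a) (f b) + dist a a' + dist b b' := by
  have h₁ : dist (f a') (f a) ≤ dist a a' := by
    simpa [dist_comm a'] using hf.dist_le_mul a' ha' a ha
  have h₂ : dist (f b) (f b') ≤ dist b b' := by simpa using hf.dist_le_mul b hb b' hb'
  linarith [dist_triangle4 (f a') (f a) (f b) (f b')]

lemma exists_dist_le_mul_dist_updateCoord {d : ℕ} (hd : 0 < d)
    (f : EuclideanSpace ℝ (Fin d) → X) {p q : EuclideanSpace ℝ (Fin d)} (hp : p ∈ unitCube d)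
    (hq : q ∈ unitCube d) : ∃ i₀ : Fin d, ∃ w ∈ unitCube d,
      dist (f p) (f q) ≤ d * dist (f (updateCoord w i₀ (p i₀))) (f (updateCoord w i₀ (q i₀))) := by
  set r : ℕ → EuclideanSpace ℝ (Fin d) :=
    fun j => WithLp.toLp 2 fun i => if (i : ℕ) < j then q i else p i
  have hr : ∀ j, r j ∈ unitCube d := fun j i => by
    by_cases h : (i : ℕ) < j <;> simp [r, h, hp i, hq i]
  have hsum : dist (f p) (f q) ≤ ∑ j ∈ Finset.range d, dist (f (r j)) (f (r (j + 1))) := by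
    have hr0 : r 0 = p := by ext i; simp [r]
    have hrd : r d = q := by ext i; simp [r]
    simpa [hr0, hrd] using dist_le_range_sum_dist (fun j => f (r j)) d
  obtain ⟨j, hj, hstep⟩ := Finset.exists_le_of_sum_le (Finset.nonempty_range_iff.2 hd.ne')
    (f := fun _ => dist (f p) (f q) / d) (g := fun j => dist (f (r j)) (f (r (j + 1))))
    (by rwa [Finset.sum_const, Finset.card_range, nsmul_eq_mul,
      mul_div_cancel₀ _ (by exact_mod_cast hd.ne' : (d : ℝ) ≠ 0)])
  have hjd : j < d := Finset.mem_range.1 hj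
  have hp' : updateCoord (r j) ⟨j, hjd⟩ (p ⟨j, hjd⟩) = r j := by
    ext i
    by_cases h : i = ⟨j, hjd⟩
    · subst h; simp [r]
    · simp [r, h]
  have hq' : updateCoord (r j) ⟨j, hjd⟩ (q ⟨j, hjd⟩) = r (j + 1) := by
    ext i
    by_cases h : i = ⟨j, hjd⟩
    · subst h; simp [r]
    · have hij : (i : ℕ) ≠ j := fun h' => h (Fin.ext h')
      by_cases h' : (i : ℕ) < j
      · simp [r, h, h', Nat.lt_succ_of_lt h']
      · simp [r, h, h', show ¬ (i : ℕ) < j + 1 by omega]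
  refine ⟨⟨j, hjd⟩, r j, hr j, ?_⟩
  rw [hp', hq']
  rwa [div_le_iff₀' (by exact_mod_cast hd)] at hstep

end Oscillation

lemma EuclideanSpace.dist_le_sum_dist {ι : Type*} [Fintype ι] (x y : EuclideanSpace ℝ ι) :
    dist x y ≤ ∑ i, dist (x i) (y i) := by
  rw [EuclideanSpace.dist_eq, Real.sqrt_le_left (Finset.sum_nonneg fun _ _ => dist_nonneg)]
  exact Finset.sum_sq_le_sq_sum_of_nonneg fun _ _ => dist_nonneg

section Tube

variable {d : ℕ}

lemma updateCoord_mem_unitCube {w : EuclideanSpace ℝ (Fin d)} (hw : w ∈ unitCube d) (i₀ : Fin d)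
    {t : ℝ} (ht : t ∈ Icc 0 1) : updateCoord w i₀ t ∈ unitCube d :=
  axisLine_subset_coordBox hw subset_rfl (updateCoord_mem_axisLine w ht)

lemma exists_tube_around_axisLine (i₀ : Fin d) {w₀ : EuclideanSpace ℝ (Fin d)}
    (hw₀ : w₀ ∈ unitCube d) {ρ : ℝ} (hρ₀ : 0 ≤ ρ) (hρ₁ : ρ ≤ 1) :
    ∃ R ⊆ unitCube d, MeasurableSet R ∧ volume R = ENNReal.ofReal ρ ^ (d - 1) ∧
      ∀ w ∈ R, ∀ t, dist (updateCoord w i₀ t) (updateCoord w₀ i₀ t) ≤ d * ρ := by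
  set a : Fin d → ℝ := fun i => min (w₀ i) (1 - ρ)
  set s : Fin d → Set ℝ := update (fun i => Icc (a i) (a i + ρ)) i₀ (Icc 0 1)
  have hs : ∀ i ≠ i₀, s i = Icc (a i) (a i + ρ) := fun i hi => by simp [s, hi]
  have hsi₀ : s i₀ = Icc 0 1 := by simp [s]
  have hmeas : ∀ i, MeasurableSet (s i) := fun i => by
    rcases eq_or_ne i i₀ with rfl | hi
    · simp [hsi₀]
    · simp [hs i hi]
  refine ⟨coordBox s, coordBox_mono fun i => ?_, measurableSet_coordBox hmeas, ?_, ?_⟩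
  · rcases eq_or_ne i i₀ with rfl | hi
    · rw [hsi₀]
    · rw [hs i hi]
      exact Icc_subset_Icc (le_min (hw₀ i).1 (by linarith))
        (by linarith [min_le_right (w₀ i) (1 - ρ)])
  · rw [volume_coordBox_update (fun i => measurableSet_Icc) i₀ measurableSet_Icc
      (v := ENNReal.ofReal ρ) fun i _ => by simp]
    simp
  · intro w hw t
    refine (EuclideanSpace.dist_le_sum_dist _ _).trans ?_
    refine (Finset.sum_le_sum fun i _ => ?_).trans_eq (by simp : ∑ _i : Fin d, ρ = d * ρ)
    rcases eq_or_ne i i₀ with rfl | hi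
    · simpa using hρ₀
    · have hwi := hw i
      rw [hs i hi] at hwi
      have hw₀i : w₀ i ≤ a i + ρ := by
        rcases min_cases (w₀ i) (1 - ρ) with ⟨h, -⟩ | ⟨h, -⟩ <;> simp only [a, h] <;>
          linarith [(hw₀ i).2]
      simp only [updateCoord_apply, update_of_ne hi, Real.dist_eq, abs_le]
      constructor <;> linarith [hwi.1, hwi.2, min_le_left (w₀ i) (1 - ρ)]

end Tube

/-- **Theorem B.**  For every `m ≥ 0` and `α > 0` there is `η > 0`, depending only on `m` and
`α`, such that for every metric space `X` and `1`-Lipschitz `f : [0,1]^{1+m} → X` with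
`diam f([0,1]^{1+m}) ≥ α`, one has `H^{1,m}_∞(f, [0,1]^{1+m}) ≥ η`. -/
theorem onedim_mapping_content (m : ℕ) (α : ℝ) (hα : 0 < α) :
    ∃ η : ℝ, 0 < η ∧
      ∀ (X : Type*) [MetricSpace X] (f : EuclideanSpace ℝ (Fin (1 + m)) → X),
        LipschitzOnWith 1 f (unitCube (1 + m)) →
        ENNReal.ofReal α ≤ EMetric.diam (f '' unitCube (1 + m)) →
        ENNReal.ofReal η ≤ mContent 1 m f (unitCube (1 + m)) := by
  set d : ℝ := ((1 + m : ℕ) : ℝ)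
  have hd : 0 < d := by positivity
  set β := α / (2 * d)
  set ρ := min 1 (β / (4 * d))
  have hρ : 0 < ρ := lt_min one_pos (by positivity)
  have hdρ : d * ρ ≤ β / 4 :=
    calc d * ρ ≤ d * (β / (4 * d)) := mul_le_mul_of_nonneg_left (min_le_right _ _) hd.le
      _ = β / 4 := by field_simp
  refine ⟨β / 2 * ρ ^ m, by positivity, fun X _ f hf hdiam => ?_⟩
  obtain ⟨_, ⟨p, hp, rfl⟩, _, ⟨q, hq, rfl⟩, hpq⟩ := exists_lt_dist_of_ofReal_lt_ediam
    (((ENNReal.ofReal_lt_ofReal_iff hα).2 (half_lt_self hα)).trans_le hdiam)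
  obtain ⟨i₀, w₀, hw₀, hstep⟩ := exists_dist_le_mul_dist_updateCoord (by omega) f hp hq
  have hβ : β < dist (f (updateCoord w₀ i₀ (p i₀))) (f (updateCoord w₀ i₀ (q i₀))) := by
    rw [div_lt_iff₀ (by positivity)]
    linarith
  obtain ⟨R, hRcube, hR, hvol, hnear⟩ := exists_tube_around_axisLine i₀ hw₀ hρ.le (min_le_left _ _)
  have hc : ∀ w ∈ R, ENNReal.ofReal (β / 2) ≤
      edist (f (updateCoord w i₀ (p i₀))) (f (updateCoord w i₀ (q i₀))) := fun w hw => by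
    have := hf.dist_le_dist_add_dist_add_dist
      (updateCoord_mem_unitCube (hRcube hw) i₀ (hp i₀))
      (updateCoord_mem_unitCube (hRcube hw) i₀ (hq i₀))
      (updateCoord_mem_unitCube hw₀ i₀ (hp i₀)) (updateCoord_mem_unitCube hw₀ i₀ (hq i₀))
    rw [edist_dist]
    exact ENNReal.ofReal_le_ofReal (by linarith [hnear w hw (p i₀), hnear w hw (q i₀)])
  calc ENNReal.ofReal (β / 2 * ρ ^ m) = ENNReal.ofReal (β / 2) * volume R := by
        rw [hvol, ENNReal.ofReal_mul (by positivity), ENNReal.ofReal_pow hρ.le,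
          Nat.add_sub_cancel_left]
    _ ≤ _ := mul_volume_le_mContent hf.continuousOn i₀ (hp i₀) (hq i₀) hR hRcube hc
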